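/- arXiv:2112.03100 — 3 statements merged into one kernel-verified Lean document; each statement's English description precedes it below -/
import Mathlib

section
/- Let (Ω, μ) be a probability space and let W : Ω → γ, C : Ω → δ, and Z : Ω → ε be measurable maps into nonempty standard Borel spaces. Assume W and C are conditionally independent given the σ-algebra generated by Z. Then for (μ.map ⟨Z, C⟩)-almost every (z, c) ∈ ε × δ, the regular conditional distribution of W given the pair ⟨Z, C⟩, evaluated at (z, c), equals the regular conditional distribution of W given Z, evaluated at z. -/
open MeasureTheory ProbabilityTheory

theorem condDistrib_pair_of_condIndepFun_general
    {Ω γ δ ε : Type*} [MeasurableSpace Ω] [StandardBorelSpace Ω]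
    [MeasurableSpace γ] [StandardBorelSpace γ] [Nonempty γ]
    [MeasurableSpace δ] [StandardBorelSpace δ] [Nonempty δ]
    [MeasurableSpace ε]
    (μ : Measure Ω) [IsProbabilityMeasure μ]
    (W : Ω → γ) (C : Ω → δ) (Z : Ω → ε)
    (hW : Measurable W) (hC : Measurable C) (hZ : Measurable Z)
    (hWC : CondIndepFun (MeasurableSpace.comap Z inferInstance) hZ.comap_le W C μ) :
    ∀ᵐ p ∂(μ.map fun ω => (Z ω, C ω)),
      condDistrib W (fun ω => (Z ω, C ω)) μ p = condDistrib W Z μ p.1 :=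
  (condIndepFun_iff_condDistrib_prod_ae_eq_prodMkRight hW hC hZ).mp hWC.symm

/-- If `W` and `C` are conditionally independent given `σ(Z)`, then conditioning `W` on the
pair `⟨Z, C⟩` gives almost everywhere the same result as conditioning on `Z` alone. -/
theorem condDistrib_pair_of_condIndepFun
    {Ω γ δ ε : Type*} [MeasurableSpace Ω] [StandardBorelSpace Ω]
    [MeasurableSpace γ] [StandardBorelSpace γ] [Nonempty γ]
    [MeasurableSpace δ] [StandardBorelSpace δ] [Nonempty δ]
    [MeasurableSpace ε] [StandardBorelSpace ε] [Nonempty ε]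
    (μ : Measure Ω) [IsProbabilityMeasure μ]
    (W : Ω → γ) (C : Ω → δ) (Z : Ω → ε)
    (hW : Measurable W) (hC : Measurable C) (hZ : Measurable Z)
    (hWC : CondIndepFun (MeasurableSpace.comap Z inferInstance) hZ.comap_le W C μ) :
    ∀ᵐ p ∂(μ.map fun ω => (Z ω, C ω)),
      condDistrib W (fun ω => (Z ω, C ω)) μ p = condDistrib W Z μ p.1 :=
  condDistrib_pair_of_condIndepFun_general μ W C Z hW hC hZ hWC
end

section
/- Let (Ω, μ) be a probability space with measurable maps S : Ω → σ (current state), T : Ω → τ (desired time until achievement), C : Ω → γc (controllable part S'^c of the next state) and W : Ω → γe (environment part S'^e of the next state) into nonempty standard Borel spaces. Assume W and C are conditionally independent given the σ-algebra generated by the pair ⟨S, T⟩. Let κ denote the regular conditional distribution of W given ⟨S, T⟩ under μ. Then for (μ.map ⟨S, C, T⟩)-almost every (s, c, t), the regular conditional distribution of the triple (C, W, T) given ⟨S, C, T⟩, evaluated at (s, c, t), equals the product measure δ_c ⊗ κ(s, t) ⊗ δ_t. -/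
/-!
Given `⟨S, C, T⟩`, the components `C` and `T` are deterministic, so the conditional law of
`(C, W, T)` is `δ_c ⊗ (law of W given ⟨S, C, T⟩) ⊗ δ_t`. Conditional independence of `W` and `C`
given `⟨S, T⟩` says that the law of `W` given `⟨⟨S, T⟩, C⟩` is `κ (s, t)`, and `⟨S, C, T⟩` is a
measurable relabeling of `⟨⟨S, T⟩, C⟩`, which does not change conditional laws.
-/

open MeasureTheory ProbabilityTheory

namespace MeasureTheory.Measure

variable {α β γ : Type*} {mα : MeasurableSpace α} {mβ : MeasurableSpace β}
  {mγ : MeasurableSpace γ} {ν : Measure α} {κ : Kernel α β}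

lemma compProd_deterministic_prod [SFinite ν] [IsSFiniteKernel κ] {f : α → γ}
    (hf : Measurable f) :
    ν ⊗ₘ (Kernel.deterministic f hf ×ₖ κ) = (ν ⊗ₘ κ).map (fun p ↦ (p.1, f p.1, p.2)) := by
  ext s hs
  rw [map_apply (by fun_prop) hs, compProd_apply hs, compProd_apply (by measurability)]
  refine lintegral_congr fun a ↦ ?_
  rw [Kernel.deterministic_prod_apply' _ _ _ (measurable_prodMk_left hs)]
  rfl

lemma compProd_prod_deterministic [SFinite ν] [IsSFiniteKernel κ] {f : α → γ}
    (hf : Measurable f) :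
    ν ⊗ₘ (κ ×ₖ Kernel.deterministic f hf) = (ν ⊗ₘ κ).map (fun p ↦ (p.1, p.2, f p.1)) := by
  ext s hs
  rw [map_apply (by fun_prop) hs, compProd_apply hs, compProd_apply (by measurability)]
  refine lintegral_congr fun a ↦ ?_
  rw [Kernel.prod_apply, Kernel.deterministic_apply, prod_dirac,
    map_apply (by fun_prop) (measurable_prodMk_left hs)]
  rfl

lemma map_compProd [SFinite ν] {η : Kernel γ β} [IsSFiniteKernel η] {f : α → γ}
    (hf : Measurable f) :
    ν.map f ⊗ₘ η = (ν ⊗ₘ η.comap f hf).map (Prod.map f id) := by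
  ext s hs
  rw [map_apply (by fun_prop) hs, compProd_apply hs, compProd_apply (by measurability),
    lintegral_map (Kernel.measurable_kernel_prodMk_left hs) hf]
  rfl

end MeasureTheory.Measure

namespace ProbabilityTheory

variable {α β γ Ω : Type*} {mα : MeasurableSpace α} {mβ : MeasurableSpace β}
  {mγ : MeasurableSpace γ} [MeasurableSpace Ω] [StandardBorelSpace Ω] [Nonempty Ω]
  {μ : Measure α} [IsFiniteMeasure μ] {X : α → β} {Y : α → Ω}

lemma condDistrib_comp_self_prod_ae_eq [StandardBorelSpace γ] [Nonempty γ]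
    (hX : Measurable X) (hY : Measurable Y) {f : β → γ} (hf : Measurable f) :
    condDistrib (fun a ↦ (f (X a), Y a)) X μ
      =ᵐ[μ.map X] Kernel.deterministic f hf ×ₖ condDistrib Y X μ := by
  refine condDistrib_ae_eq_of_measure_eq_compProd X (by fun_prop) ?_
  rw [Measure.compProd_deterministic_prod, compProd_map_condDistrib hY.aemeasurable,
    Measure.map_map (by fun_prop) (by fun_prop)]
  rfl

lemma condDistrib_prod_comp_self_ae_eq [StandardBorelSpace γ] [Nonempty γ]
    (hX : Measurable X) (hY : Measurable Y) {f : β → γ} (hf : Measurable f) :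
    condDistrib (fun a ↦ (Y a, f (X a))) X μ
      =ᵐ[μ.map X] condDistrib Y X μ ×ₖ Kernel.deterministic f hf := by
  refine condDistrib_ae_eq_of_measure_eq_compProd X (by fun_prop) ?_
  rw [Measure.compProd_prod_deterministic, compProd_map_condDistrib hY.aemeasurable,
    Measure.map_map (by fun_prop) (by fun_prop)]
  rfl

lemma condDistrib_comp_right_ae_eq_comap (hX : Measurable X) (hY : Measurable Y)
    {f : β → γ} {g : γ → β} (hf : Measurable f) (hg : Measurable g)
    (hgf : Function.LeftInverse g f) {η : Kernel β Ω} [IsFiniteKernel η]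
    (h : condDistrib Y X μ =ᵐ[μ.map X] η) :
    condDistrib Y (fun a ↦ f (X a)) μ =ᵐ[μ.map (fun a ↦ f (X a))] η.comap g hg := by
  rw [condDistrib_ae_eq_iff_measure_eq_compProd _ hY.aemeasurable] at h ⊢
  have hcomap : (η.comap g hg).comap f hf = η := by
    ext1 b
    rw [Kernel.comap_apply, Kernel.comap_apply, hgf b]
  rw [← Function.comp_def, ← Measure.map_map hf hX, Measure.map_compProd hf, hcomap, ← h,
    Measure.map_map (by fun_prop) (by fun_prop)]
  rfl

end ProbabilityTheory

theorem condDistrib_timed_subgoal_factorization_general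
    {Ω σ τ γc γe : Type*} [MeasurableSpace Ω] [StandardBorelSpace Ω]
    [MeasurableSpace σ]
    [MeasurableSpace τ] [StandardBorelSpace τ] [Nonempty τ]
    [MeasurableSpace γc] [StandardBorelSpace γc] [Nonempty γc]
    [MeasurableSpace γe] [StandardBorelSpace γe] [Nonempty γe]
    (μ : Measure Ω) [IsProbabilityMeasure μ]
    (S : Ω → σ) (T : Ω → τ) (C : Ω → γc) (W : Ω → γe)
    (hS : Measurable S) (hT : Measurable T) (hC : Measurable C) (hW : Measurable W)
    (hWC : CondIndepFun
      (MeasurableSpace.comap (fun ω => (S ω, T ω)) inferInstance)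
      ((hS.prodMk hT).comap_le) W C μ) :
    ∀ᵐ p ∂(μ.map fun ω => (S ω, C ω, T ω)),
      condDistrib (fun ω => (C ω, W ω, T ω)) (fun ω => (S ω, C ω, T ω)) μ p
        = (Measure.dirac p.2.1).prod
            ((condDistrib W (fun ω => (S ω, T ω)) μ (p.1, p.2.2)).prod
              (Measure.dirac p.2.2)) := by
  have hST : Measurable fun ω => (S ω, T ω) := hS.prodMk hT
  have hX : Measurable fun ω => (S ω, C ω, T ω) := hS.prodMk (hC.prodMk hT)
  have hW_given_STC : condDistrib W (fun ω ↦ ((S ω, T ω), C ω)) μ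
      =ᵐ[μ.map fun ω ↦ ((S ω, T ω), C ω)]
        (condDistrib W (fun ω ↦ (S ω, T ω)) μ).prodMkRight γc :=
    (condIndepFun_iff_condDistrib_prod_ae_eq_prodMkRight hW hC hST).mp hWC.symm
  have hW_given_SCT := condDistrib_comp_right_ae_eq_comap (hST.prodMk hC) hW
    (f := fun q ↦ (q.1.1, q.2, q.1.2)) (g := fun p ↦ ((p.1, p.2.2), p.2.1))
    (by fun_prop) (by fun_prop) (fun _ ↦ rfl) hW_given_STC
  filter_upwards [
    condDistrib_comp_self_prod_ae_eq hX (hW.prodMk hT) (f := fun p ↦ p.2.1) (by fun_prop),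
    condDistrib_prod_comp_self_ae_eq hX hW (f := fun p ↦ p.2.2) (by fun_prop), hW_given_SCT]
    with p hCWT hWT hW_p
  rw [hCWT, Kernel.prod_apply, hWT, Kernel.prod_apply, hW_p]
  rfl

/-- Proposition 2 (main factorization): if the environment part `W = S'^e` of the next state is
conditionally independent of the controllable part `C = S'^c` given the pair
`(state, desired time) = ⟨S, T⟩`, then the conditional law of `(C, W, T)` given the relabeled
high-level transition data `⟨S, C, T⟩` factorizes as `δ_c ⊗ κ (s, t) ⊗ δ_t`, where
`κ = condDistrib W ⟨S, T⟩ μ`. -/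
theorem condDistrib_timed_subgoal_factorization
    {Ω σ τ γc γe : Type*} [MeasurableSpace Ω] [StandardBorelSpace Ω]
    [MeasurableSpace σ] [StandardBorelSpace σ] [Nonempty σ]
    [MeasurableSpace τ] [StandardBorelSpace τ] [Nonempty τ]
    [MeasurableSpace γc] [StandardBorelSpace γc] [Nonempty γc]
    [MeasurableSpace γe] [StandardBorelSpace γe] [Nonempty γe]
    (μ : Measure Ω) [IsProbabilityMeasure μ]
    (S : Ω → σ) (T : Ω → τ) (C : Ω → γc) (W : Ω → γe)
    (hS : Measurable S) (hT : Measurable T) (hC : Measurable C) (hW : Measurable W)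
    (hWC : CondIndepFun
      (MeasurableSpace.comap (fun ω => (S ω, T ω)) inferInstance)
      ((hS.prodMk hT).comap_le) W C μ) :
    ∀ᵐ p ∂(μ.map fun ω => (S ω, C ω, T ω)),
      condDistrib (fun ω => (C ω, W ω, T ω)) (fun ω => (S ω, C ω, T ω)) μ p
        = (Measure.dirac p.2.1).prod
            ((condDistrib W (fun ω => (S ω, T ω)) μ (p.1, p.2.2)).prod
              (Measure.dirac p.2.2)) :=
  condDistrib_timed_subgoal_factorization_general μ S T C W hS hT hC hW hWC
end

section
/- Let σ, τ, γc, γe be nonempty standard Borel spaces and let κ be a Markov kernel from σ × τ to γe. For i = 1, 2 let (Ωᵢ, μᵢ) be probability spaces with measurable maps Sᵢ : Ωᵢ → σ, Tᵢ : Ωᵢ → τ, Cᵢ : Ωᵢ → γc and Wᵢ : Ωᵢ → γe such that (a) Wᵢ and Cᵢ are conditionally independent given the σ-algebra generated by ⟨Sᵢ, Tᵢ⟩ with respect to μᵢ, and (b) the regular conditional distribution of Wᵢ given ⟨Sᵢ, Tᵢ⟩ under μᵢ is (μᵢ.map ⟨Sᵢ, Tᵢ⟩)-almost everywhere equal to κ.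 Then for each i and (μᵢ.map ⟨Sᵢ, Cᵢ, Tᵢ⟩)-almost every (s, c, t), the regular conditional distribution of (Cᵢ, Wᵢ, Tᵢ) given ⟨Sᵢ, Cᵢ, Tᵢ⟩, evaluated at (s, c, t), equals the product measure δ_c ⊗ κ(s, t) ⊗ δ_t; in particular both conditional distributions are almost everywhere equal to one and the same kernel, independent of i. -/
/-!
Conditional independence of `W` and `C` given `(S, T)` says that the conditional law of `W`
given `((S, T), C)` is its conditional law given `(S, T)`, namely `κ (S, T)`. The relabeled
transition `(C, W, T)` is a measurable function of `((S, T), C)` and `W`, and `(S, C, T)` is a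
relabeling of `((S, T), C)`, so the conditional law of `(C, W, T)` given `(S, C, T) = (s, c, t)`
is the image of `κ (s, t)` under `w ↦ (c, w, t)`, that is `δ_c ⊗ κ (s, t) ⊗ δ_t`: a kernel built
from `κ` alone, whatever the joint law `μᵢ`.
-/

open MeasureTheory ProbabilityTheory

section General

variable {α β β' Ω Ω' : Type*} {mα : MeasurableSpace α} {mβ : MeasurableSpace β}
  {mβ' : MeasurableSpace β'} {mΩ : MeasurableSpace Ω} {mΩ' : MeasurableSpace Ω'}

lemma MeasureTheory.Measure.map_compProd_eq_compProd_of_apply_eq (ν : Measure β) [SFinite ν]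
    (κ : Kernel β Ω) [IsSFiniteKernel κ] (η : Kernel β' Ω') [IsSFiniteKernel η]
    {e : β → β'} (he : Measurable e) {g : β × Ω → Ω'} (hg : Measurable g)
    (hη : ∀ b, η (e b) = (κ b).map (fun w ↦ g (b, w))) :
    (ν ⊗ₘ κ).map (fun p ↦ (e p.1, g p)) = ν.map e ⊗ₘ η := by
  have hkernel : (Kernel.id ×ₖ κ).map (fun p ↦ (e p.1, g p))
      = (Kernel.id ×ₖ η).comap e he := by
    ext1 b
    -- both sides are images of `κ b`, since `δ_b ⊗ κ b = (κ b).map (b, ·)`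
    rw [Kernel.map_apply _ (by fun_prop), Kernel.prod_apply, Kernel.comap_apply,
      Kernel.prod_apply, Kernel.id_apply, Kernel.id_apply, Measure.dirac_prod, Measure.dirac_prod,
      hη, Measure.map_map (by fun_prop) measurable_prodMk_left,
      Measure.map_map (by fun_prop) (by fun_prop)]
    rfl
  rw [Measure.compProd_eq_comp_prod, Measure.compProd_eq_comp_prod,
    Measure.map_comp _ _ (by fun_prop), hkernel, ← Kernel.comp_deterministic_eq_comap,
    ← Measure.comp_assoc, Measure.deterministic_comp_eq_map]

variable {μ : Measure α} [IsFiniteMeasure μ]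

lemma ProbabilityTheory.condDistrib_map_prodMk_ae_eq [StandardBorelSpace Ω] [Nonempty Ω]
    [StandardBorelSpace Ω'] [Nonempty Ω'] {X : α → β} {W : α → Ω}
    (hX : Measurable X) (hW : Measurable W) {κ : Kernel β Ω} [IsFiniteKernel κ]
    (hκ : condDistrib W X μ =ᵐ[μ.map X] κ) (η : Kernel β' Ω') [IsFiniteKernel η]
    {e : β → β'} (he : Measurable e) {g : β × Ω → Ω'} (hg : Measurable g)
    (hη : ∀ b, η (e b) = (κ b).map (fun w ↦ g (b, w))) :
    condDistrib (fun a ↦ g (X a, W a)) (fun a ↦ e (X a)) μ =ᵐ[μ.map (fun a ↦ e (X a))] η := by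
  refine condDistrib_ae_eq_of_measure_eq_compProd _ (by fun_prop) ?_
  calc μ.map (fun a ↦ (e (X a), g (X a, W a)))
      = (μ.map (fun a ↦ (X a, W a))).map (fun p ↦ (e p.1, g p)) := by
        rw [Measure.map_map (by fun_prop) (by fun_prop)]
        rfl
    _ = (μ.map X ⊗ₘ κ).map (fun p ↦ (e p.1, g p)) := by
        rw [(condDistrib_ae_eq_iff_measure_eq_compProd X hW.aemeasurable κ).mp hκ]
    _ = (μ.map X).map e ⊗ₘ η := Measure.map_compProd_eq_compProd_of_apply_eq _ κ η he hg hη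
    _ = μ.map (fun a ↦ e (X a)) ⊗ₘ η := by
        rw [Measure.map_map he hX]
        rfl

lemma ProbabilityTheory.condDistrib_prodMk_ae_eq_prodMkRight_of_condIndepFun
    [StandardBorelSpace α] [StandardBorelSpace Ω] [Nonempty Ω]
    [StandardBorelSpace Ω'] [Nonempty Ω'] {k : α → β} {W : α → Ω} {C : α → Ω'}
    (hk : Measurable k) (hW : Measurable W) (hC : Measurable C)
    (hWC : W ⟂ᵢ[k, hk; μ] C) {κ : Kernel β Ω} (hκ : condDistrib W k μ =ᵐ[μ.map k] κ) :
    condDistrib W (fun a ↦ (k a, C a)) μ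
      =ᵐ[μ.map (fun a ↦ (k a, C a))] κ.prodMkRight Ω' := by
  have hκ' : (condDistrib W k μ ∘ Prod.fst) =ᵐ[μ.map (fun a ↦ (k a, C a))] κ ∘ Prod.fst := by
    refine ae_eq_comp measurable_fst.aemeasurable ?_
    rwa [Measure.map_map measurable_fst (hk.prodMk hC)]
  filter_upwards [(condIndepFun_iff_condDistrib_prod_ae_eq_prodMkRight hW hC hk).mp hWC.symm,
    hκ'] with p hp hp'
  rw [hp, Kernel.prodMkRight_apply, Kernel.prodMkRight_apply]
  exact hp'

end General

section TimedSubgoal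

variable {σ τ γc γe : Type*} [MeasurableSpace σ] [MeasurableSpace τ] [MeasurableSpace γc]
  [MeasurableSpace γe]

noncomputable def timedSubgoalKernel (κ : Kernel (σ × τ) γe) [IsSFiniteKernel κ] :
    Kernel (σ × γc × τ) (γc × γe × τ) :=
  Kernel.deterministic (fun p ↦ p.2.1) (by fun_prop) ×ₖ
    (κ.comap (fun p ↦ (p.1, p.2.2)) (by fun_prop) ×ₖ
      Kernel.deterministic (fun p ↦ p.2.2) (by fun_prop))

variable (κ : Kernel (σ × τ) γe)

instance [IsFiniteKernel κ] : IsFiniteKernel (timedSubgoalKernel (γc := γc) κ) := by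
  unfold timedSubgoalKernel; infer_instance

lemma timedSubgoalKernel_apply [IsSFiniteKernel κ] (p : σ × γc × τ) :
    timedSubgoalKernel κ p
      = (Measure.dirac p.2.1).prod ((κ (p.1, p.2.2)).prod (Measure.dirac p.2.2)) := by
  rw [timedSubgoalKernel, Kernel.prod_apply, Kernel.prod_apply, Kernel.deterministic_apply,
    Kernel.deterministic_apply, Kernel.comap_apply]

lemma timedSubgoalKernel_apply_eq_map [IsSFiniteKernel κ] (s : σ) (c : γc) (t : τ) :
    timedSubgoalKernel κ (s, c, t) = (κ (s, t)).map (fun w ↦ (c, w, t)) := by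
  rw [timedSubgoalKernel_apply, Measure.prod_dirac, Measure.dirac_prod,
    Measure.map_map (by fun_prop) (by fun_prop)]
  rfl

lemma condDistrib_timedSubgoal_ae_eq [StandardBorelSpace τ] [Nonempty τ]
    [StandardBorelSpace γc] [Nonempty γc] [StandardBorelSpace γe] [Nonempty γe]
    [IsFiniteKernel κ] {Ω : Type*} [MeasurableSpace Ω] [StandardBorelSpace Ω]
    (μ : Measure Ω) [IsFiniteMeasure μ] {S : Ω → σ} {T : Ω → τ} {C : Ω → γc} {W : Ω → γe}
    (hS : Measurable S) (hT : Measurable T) (hC : Measurable C) (hW : Measurable W)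
    (hWC : W ⟂ᵢ[fun ω ↦ (S ω, T ω), hS.prodMk hT; μ] C)
    (hκ : ∀ᵐ q ∂(μ.map fun ω ↦ (S ω, T ω)), condDistrib W (fun ω ↦ (S ω, T ω)) μ q = κ q) :
    ∀ᵐ p ∂(μ.map fun ω ↦ (S ω, C ω, T ω)),
      condDistrib (fun ω ↦ (C ω, W ω, T ω)) (fun ω ↦ (S ω, C ω, T ω)) μ p
        = (Measure.dirac p.2.1).prod ((κ (p.1, p.2.2)).prod (Measure.dirac p.2.2)) := by
  have hW_given_STC := condDistrib_prodMk_ae_eq_prodMkRight_of_condIndepFun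
    (hS.prodMk hT) hW hC hWC hκ
  have hrelabel := condDistrib_map_prodMk_ae_eq ((hS.prodMk hT).prodMk hC) hW hW_given_STC
    (timedSubgoalKernel κ) (e := fun q ↦ (q.1.1, q.2, q.1.2)) (by fun_prop)
    (g := fun q ↦ (q.1.2, q.2, q.1.1.2)) (by fun_prop)
    (fun q ↦ timedSubgoalKernel_apply_eq_map κ _ _ _)
  filter_upwards [hrelabel] with p hp
  rw [hp, timedSubgoalKernel_apply]

end TimedSubgoal

theorem condDistrib_timed_subgoal_stationary_general
    {σ τ γc γe : Type*}
    [MeasurableSpace σ]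
    [MeasurableSpace τ] [StandardBorelSpace τ] [Nonempty τ]
    [MeasurableSpace γc] [StandardBorelSpace γc] [Nonempty γc]
    [MeasurableSpace γe] [StandardBorelSpace γe] [Nonempty γe]
    (κ : Kernel (σ × τ) γe) [IsMarkovKernel κ]
    {Ω₁ Ω₂ : Type*}
    [MeasurableSpace Ω₁] [StandardBorelSpace Ω₁]
    [MeasurableSpace Ω₂] [StandardBorelSpace Ω₂]
    (μ₁ : Measure Ω₁) [IsProbabilityMeasure μ₁]
    (μ₂ : Measure Ω₂) [IsProbabilityMeasure μ₂]
    (S₁ : Ω₁ → σ) (T₁ : Ω₁ → τ) (C₁ : Ω₁ → γc) (W₁ : Ω₁ → γe)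
    (hS₁ : Measurable S₁) (hT₁ : Measurable T₁) (hC₁ : Measurable C₁) (hW₁ : Measurable W₁)
    (S₂ : Ω₂ → σ) (T₂ : Ω₂ → τ) (C₂ : Ω₂ → γc) (W₂ : Ω₂ → γe)
    (hS₂ : Measurable S₂) (hT₂ : Measurable T₂) (hC₂ : Measurable C₂) (hW₂ : Measurable W₂)
    (hWC₁ : CondIndepFun
      (MeasurableSpace.comap (fun ω => (S₁ ω, T₁ ω)) inferInstance)
      ((hS₁.prodMk hT₁).comap_le) W₁ C₁ μ₁)
    (hWC₂ : CondIndepFun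
      (MeasurableSpace.comap (fun ω => (S₂ ω, T₂ ω)) inferInstance)
      ((hS₂.prodMk hT₂).comap_le) W₂ C₂ μ₂)
    (hκ₁ : ∀ᵐ q ∂(μ₁.map fun ω => (S₁ ω, T₁ ω)),
      condDistrib W₁ (fun ω => (S₁ ω, T₁ ω)) μ₁ q = κ q)
    (hκ₂ : ∀ᵐ q ∂(μ₂.map fun ω => (S₂ ω, T₂ ω)),
      condDistrib W₂ (fun ω => (S₂ ω, T₂ ω)) μ₂ q = κ q) :
    (∀ᵐ p ∂(μ₁.map fun ω => (S₁ ω, C₁ ω, T₁ ω)),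
      condDistrib (fun ω => (C₁ ω, W₁ ω, T₁ ω)) (fun ω => (S₁ ω, C₁ ω, T₁ ω)) μ₁ p
        = (Measure.dirac p.2.1).prod
            ((κ (p.1, p.2.2)).prod (Measure.dirac p.2.2))) ∧
    (∀ᵐ p ∂(μ₂.map fun ω => (S₂ ω, C₂ ω, T₂ ω)),
      condDistrib (fun ω => (C₂ ω, W₂ ω, T₂ ω)) (fun ω => (S₂ ω, C₂ ω, T₂ ω)) μ₂ p
        = (Measure.dirac p.2.1).prod
            ((κ (p.1, p.2.2)).prod (Measure.dirac p.2.2))) :=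
  ⟨condDistrib_timedSubgoal_ae_eq κ μ₁ hS₁ hT₁ hC₁ hW₁ hWC₁ hκ₁,
    condDistrib_timedSubgoal_ae_eq κ μ₂ hS₂ hT₂ hC₂ hW₂ hWC₂ hκ₂⟩

/-- Stationarity conclusion of Proposition 2: for two (possibly different) joint laws during
training, if in both cases the environment part evolves conditionally independently of the
controllable part given `(state, desired time)` with the same environment kernel `κ`, then both
relabeled high-level conditional distributions coincide almost everywhere with one and the same
stationary kernel `(s, c, t) ↦ δ_c ⊗ κ (s, t) ⊗ δ_t`. -/
theorem condDistrib_timed_subgoal_stationary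
    {σ τ γc γe : Type*}
    [MeasurableSpace σ] [StandardBorelSpace σ] [Nonempty σ]
    [MeasurableSpace τ] [StandardBorelSpace τ] [Nonempty τ]
    [MeasurableSpace γc] [StandardBorelSpace γc] [Nonempty γc]
    [MeasurableSpace γe] [StandardBorelSpace γe] [Nonempty γe]
    (κ : Kernel (σ × τ) γe) [IsMarkovKernel κ]
    {Ω₁ Ω₂ : Type*}
    [MeasurableSpace Ω₁] [StandardBorelSpace Ω₁]
    [MeasurableSpace Ω₂] [StandardBorelSpace Ω₂]
    (μ₁ : Measure Ω₁) [IsProbabilityMeasure μ₁]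
    (μ₂ : Measure Ω₂) [IsProbabilityMeasure μ₂]
    (S₁ : Ω₁ → σ) (T₁ : Ω₁ → τ) (C₁ : Ω₁ → γc) (W₁ : Ω₁ → γe)
    (hS₁ : Measurable S₁) (hT₁ : Measurable T₁) (hC₁ : Measurable C₁) (hW₁ : Measurable W₁)
    (S₂ : Ω₂ → σ) (T₂ : Ω₂ → τ) (C₂ : Ω₂ → γc) (W₂ : Ω₂ → γe)
    (hS₂ : Measurable S₂) (hT₂ : Measurable T₂) (hC₂ : Measurable C₂) (hW₂ : Measurable W₂)
    (hWC₁ : CondIndepFun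
      (MeasurableSpace.comap (fun ω => (S₁ ω, T₁ ω)) inferInstance)
      ((hS₁.prodMk hT₁).comap_le) W₁ C₁ μ₁)
    (hWC₂ : CondIndepFun
      (MeasurableSpace.comap (fun ω => (S₂ ω, T₂ ω)) inferInstance)
      ((hS₂.prodMk hT₂).comap_le) W₂ C₂ μ₂)
    (hκ₁ : ∀ᵐ q ∂(μ₁.map fun ω => (S₁ ω, T₁ ω)),
      condDistrib W₁ (fun ω => (S₁ ω, T₁ ω)) μ₁ q = κ q)
    (hκ₂ : ∀ᵐ q ∂(μ₂.map fun ω => (S₂ ω, T₂ ω)),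
      condDistrib W₂ (fun ω => (S₂ ω, T₂ ω)) μ₂ q = κ q) :
    (∀ᵐ p ∂(μ₁.map fun ω => (S₁ ω, C₁ ω, T₁ ω)),
      condDistrib (fun ω => (C₁ ω, W₁ ω, T₁ ω)) (fun ω => (S₁ ω, C₁ ω, T₁ ω)) μ₁ p
        = (Measure.dirac p.2.1).prod
            ((κ (p.1, p.2.2)).prod (Measure.dirac p.2.2))) ∧
    (∀ᵐ p ∂(μ₂.map fun ω => (S₂ ω, C₂ ω, T₂ ω)),
      condDistrib (fun ω => (C₂ ω, W₂ ω, T₂ ω)) (fun ω => (S₂ ω, C₂ ω, T₂ ω)) μ₂ p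
        = (Measure.dirac p.2.1).prod
            ((κ (p.1, p.2.2)).prod (Measure.dirac p.2.2))) :=
  condDistrib_timed_subgoal_stationary_general κ μ₁ μ₂ S₁ T₁ C₁ W₁ hS₁ hT₁ hC₁ hW₁ S₂ T₂ C₂ W₂ hS₂
    hT₂ hC₂ hW₂ hWC₁ hWC₂ hκ₁ hκ₂
end
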